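/- Let A be a POVM with n outcomes on ℂ^d. Then the following are equivalent: (i) A is not informationally complete with respect to the set of pure states; (ii) there exists a nonzero selfadjoint matrix T with rank T ≤ 2 and trace(T * A j) = 0 for all j; (iii) there exists a selfadjoint matrix T with rank T = 2 and trace(T * A j) = 0 for all j. -/

import Mathlib

/-!
The difference of two distinct pure states is a nonzero Hermitian matrix of rank at most 2, and it
is orthogonal to every POVM element when the two states have the same statistics. Conversely, as
the POVM elements sum to the identity, a Hermitian `T` orthogonal to all of them is traceless. A
traceless Hermitian matrix cannot have rank 1, and if it has rank 2 its nonzero eigenvalues are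
`λ, -λ`, so `T = λ (P₁ - P₂)` with `P₁ ≠ P₂` the projections onto two orthonormal eigenvectors:
these are two pure states with the same statistics.
-/

open Matrix
open scoped ComplexOrder

/-- A POVM with `n` outcomes on `ℂ^d`: a family of positive semidefinite matrices summing to the
identity. -/
def IsPOVM {d n : ℕ} (A : Fin n → Matrix (Fin d) (Fin d) ℂ) : Prop :=
  (∀ j, (A j).PosSemidef) ∧ ∑ j, A j = 1

/-- A state on `ℂ^d`: a positive semidefinite matrix with trace 1. -/
def IsState {d : ℕ} (ρ : Matrix (Fin d) (Fin d) ℂ) : Prop :=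
  ρ.PosSemidef ∧ ρ.trace = 1

/-- A family of matrices (e.g. a POVM or a collection of selfadjoint operators) is
informationally complete w.r.t. a set `P` of states if the expectation values
`trace (ρ * A j)` separate the points of `P`. -/
def IsIC {d n : ℕ} (A : Fin n → Matrix (Fin d) (Fin d) ℂ)
    (P : Set (Matrix (Fin d) (Fin d) ℂ)) : Prop :=
  ∀ ρ₁ ∈ P, ∀ ρ₂ ∈ P, (∀ j, (ρ₁ * A j).trace = (ρ₂ * A j).trace) → ρ₁ = ρ₂

/-- The set of pure states on `ℂ^d`: states of rank 1. -/
def PureStates (d : ℕ) : Set (Matrix (Fin d) (Fin d) ℂ) :=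
  {ρ | IsState ρ ∧ ρ.rank = 1}

open Finset

namespace Matrix

variable {m n K : Type*} [Fintype n] [Field K]

theorem rank_sub_le (A B : Matrix m n K) : (A - B).rank ≤ A.rank + B.rank := by
  refine (Submodule.finrank_mono ?_).trans (Submodule.finrank_add_le_finrank_add_finrank _ _)
  rintro _ ⟨x, rfl⟩
  rw [mulVecLin_apply, sub_mulVec]
  exact Submodule.sub_mem_sup ⟨x, rfl⟩ ⟨x, rfl⟩

theorem rank_eq_zero_iff [DecidableEq n] {A : Matrix m n K} : A.rank = 0 ↔ A = 0 := by
  rw [rank, Submodule.finrank_eq_zero, LinearMap.range_eq_bot, ← toLin'_apply',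
    LinearEquiv.map_eq_zero_iff]

theorem trace_eq_zero_of_forall_trace_mul_eq_zero {ι R : Type*} [Fintype ι] [DecidableEq n]
    [NonAssocSemiring R] {A : ι → Matrix n n R} (hA : ∑ j, A j = 1) {T : Matrix n n R}
    (hT : ∀ j, (T * A j).trace = 0) : T.trace = 0 := by
  rw [← mul_one T, ← hA, mul_sum, trace_sum]
  exact sum_eq_zero fun j _ => hT j

namespace IsHermitian

variable {𝕜 : Type*} [RCLike 𝕜] [DecidableEq n] {A : Matrix n n 𝕜} (hA : A.IsHermitian)

noncomputable def eigenprojection (i : n) : Matrix n n 𝕜 :=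
  vecMulVec ⇑(hA.eigenvectorBasis i) (star ⇑(hA.eigenvectorBasis i))

theorem star_eigenvectorBasis_dotProduct (i j : n) :
    star ⇑(hA.eigenvectorBasis i) ⬝ᵥ ⇑(hA.eigenvectorBasis j) = if i = j then 1 else 0 := by
  rw [dotProduct_comm, ← EuclideanSpace.inner_eq_star_dotProduct]
  exact orthonormal_iff_ite.mp hA.eigenvectorBasis.orthonormal i j

theorem eigenprojection_mulVec (i j : n) :
    hA.eigenprojection i *ᵥ ⇑(hA.eigenvectorBasis j) =
      if i = j then ⇑(hA.eigenvectorBasis j) else 0 := by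
  rw [eigenprojection, vecMulVec_mulVec, star_eigenvectorBasis_dotProduct]
  split_ifs with h
  · subst h; simp
  · simp

theorem trace_eigenprojection (i : n) : (hA.eigenprojection i).trace = 1 := by
  rw [eigenprojection, trace_vecMulVec, dotProduct_comm, star_eigenvectorBasis_dotProduct,
    if_pos rfl]

theorem eigenprojection_injective : Function.Injective hA.eigenprojection := by
  intro i j hij
  by_contra hne
  have h := congrArg (· *ᵥ ⇑(hA.eigenvectorBasis i)) hij
  simp only [eigenprojection_mulVec, if_pos, if_neg (Ne.symm hne)] at h
  exact hA.eigenvectorBasis.orthonormal.ne_zero i (by simpa using h)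

theorem eq_sum_eigenvalues_smul_eigenprojection :
    A = ∑ i, (hA.eigenvalues i : 𝕜) • hA.eigenprojection i := by
  ext x y
  conv_lhs => rw [hA.spectral_theorem, Unitary.conjStarAlgAut_apply]
  simp [eigenprojection, mul_apply, vecMulVec_apply, Matrix.sum_apply, diagonal_apply,
    RCLike.real_smul_eq_coe_mul]
  exact sum_congr rfl fun i _ => by ring

theorem eq_sum_filter_eigenvalues_ne_zero :
    A = ∑ i with hA.eigenvalues i ≠ 0, (hA.eigenvalues i : 𝕜) • hA.eigenprojection i := by
  conv_lhs => rw [hA.eq_sum_eigenvalues_smul_eigenprojection]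
  symm
  apply sum_filter_of_ne
  intro i _ h hi
  simp [hi] at h

theorem trace_eq_sum_filter_eigenvalues_ne_zero :
    A.trace = ∑ i with hA.eigenvalues i ≠ 0, (hA.eigenvalues i : 𝕜) := by
  conv_lhs => rw [hA.eq_sum_filter_eigenvalues_ne_zero]
  simp [trace_sum, trace_smul, trace_eigenprojection, RCLike.real_smul_eq_coe_mul]

theorem rank_eq_card_filter_eigenvalues_ne_zero :
    A.rank = #{i | hA.eigenvalues i ≠ 0} := by
  rw [hA.rank_eq_card_non_zero_eigs, Fintype.card_subtype]

theorem rank_ne_one_of_trace_eq_zero (hA : A.IsHermitian) (htr : A.trace = 0) : A.rank ≠ 1 := by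
  intro hrank
  obtain ⟨i, hi⟩ := card_eq_one.mp (hA.rank_eq_card_filter_eigenvalues_ne_zero ▸ hrank)
  have hei : hA.eigenvalues i ≠ 0 := by
    simpa using hi.symm.subset (mem_singleton_self i)
  rw [hA.trace_eq_sum_filter_eigenvalues_ne_zero, hi, sum_singleton] at htr
  exact hei (by exact_mod_cast htr)

theorem rank_eq_two_of_trace_eq_zero (hA : A.IsHermitian) (hA0 : A ≠ 0) (hrank : A.rank ≤ 2)
    (htr : A.trace = 0) : A.rank = 2 := by
  have h0 : A.rank ≠ 0 := fun h => hA0 (rank_eq_zero_iff.mp h)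
  have h1 := hA.rank_ne_one_of_trace_eq_zero htr
  omega

theorem exists_eq_smul_sub_eigenprojection_of_rank_eq_two (hrank : A.rank = 2)
    (htr : A.trace = 0) : ∃ i k, i ≠ k ∧ ∃ c : ℝ, c ≠ 0 ∧
      A = (c : 𝕜) • (hA.eigenprojection i - hA.eigenprojection k) := by
  obtain ⟨i, k, hik, hS⟩ := card_eq_two.mp (hA.rank_eq_card_filter_eigenvalues_ne_zero ▸ hrank)
  have hei : hA.eigenvalues i ≠ 0 := by simpa using hS.symm.subset (mem_insert_self i {k})
  have hek : (hA.eigenvalues k : 𝕜) = -hA.eigenvalues i := by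
    rw [hA.trace_eq_sum_filter_eigenvalues_ne_zero, hS, sum_pair hik] at htr
    linear_combination htr
  refine ⟨i, k, hik, hA.eigenvalues i, hei, ?_⟩
  conv_lhs => rw [hA.eq_sum_filter_eigenvalues_ne_zero, hS, sum_pair hik, hek]
  rw [smul_sub, neg_smul, sub_eq_add_neg]

end IsHermitian

end Matrix

theorem Matrix.IsHermitian.eigenprojection_mem_pureStates {d : ℕ} {T : Matrix (Fin d) (Fin d) ℂ}
    (hT : T.IsHermitian) (i : Fin d) : hT.eigenprojection i ∈ PureStates d := by
  have htr := hT.trace_eigenprojection i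
  refine ⟨⟨posSemidef_vecMulVec_self_star _, htr⟩, le_antisymm (rank_vecMulVec_le _ _) ?_⟩
  rw [Nat.one_le_iff_ne_zero, Ne, rank_eq_zero_iff]
  rintro h
  simp [h] at htr

variable {d n : ℕ} {A : Fin n → Matrix (Fin d) (Fin d) ℂ}

theorem exists_hermitian_rank_le_two_of_not_isIC (h : ¬ IsIC A (PureStates d)) :
    ∃ T : Matrix (Fin d) (Fin d) ℂ, T.IsHermitian ∧ T ≠ 0 ∧ T.rank ≤ 2 ∧
      ∀ j, (T * A j).trace = 0 := by
  simp only [IsIC, not_forall] at h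
  obtain ⟨ρ₁, ⟨⟨hρ₁, -⟩, hr₁⟩, ρ₂, ⟨⟨hρ₂, -⟩, hr₂⟩, heq, hne⟩ := h
  refine ⟨ρ₁ - ρ₂, hρ₁.isHermitian.sub hρ₂.isHermitian, sub_ne_zero.mpr hne, ?_, fun j => ?_⟩
  · calc (ρ₁ - ρ₂).rank ≤ ρ₁.rank + ρ₂.rank := rank_sub_le _ _
      _ = 2 := by rw [hr₁, hr₂]
  · rw [sub_mul, trace_sub, heq j, sub_self]

theorem not_isIC_of_rank_eq_two {T : Matrix (Fin d) (Fin d) ℂ} (hT : T.IsHermitian)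
    (hrank : T.rank = 2) (htr : T.trace = 0) (horth : ∀ j, (T * A j).trace = 0) :
    ¬ IsIC A (PureStates d) := by
  obtain ⟨i, k, hik, c, hc, hTc⟩ := hT.exists_eq_smul_sub_eigenprojection_of_rank_eq_two hrank htr
  intro hIC
  refine hik (hT.eigenprojection_injective (hIC _ (hT.eigenprojection_mem_pureStates i) _
    (hT.eigenprojection_mem_pureStates k) fun j => ?_))
  have h := horth j
  rw [hTc, smul_mul, trace_smul, sub_mul, trace_sub, smul_eq_mul, mul_eq_zero] at h
  exact sub_eq_zero.mp (h.resolve_left (by simpa using hc))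

/-- Prop. 6 of the paper: a POVM `A` fails to be informationally complete w.r.t. the pure states
iff there is a nonzero selfadjoint matrix of rank at most `2` orthogonal to all POVM elements,
iff there is a selfadjoint matrix of rank exactly `2` orthogonal to all POVM elements. -/
theorem not_pure_state_ic_iff (d n : ℕ) (A : Fin n → Matrix (Fin d) (Fin d) ℂ)
    (hA : IsPOVM A) :
    (¬ IsIC A (PureStates d) ↔
      ∃ T : Matrix (Fin d) (Fin d) ℂ, T.IsHermitian ∧ T ≠ 0 ∧ T.rank ≤ 2 ∧
        ∀ j, (T * A j).trace = 0) ∧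
    (¬ IsIC A (PureStates d) ↔
      ∃ T : Matrix (Fin d) (Fin d) ℂ, T.IsHermitian ∧ T.rank = 2 ∧
        ∀ j, (T * A j).trace = 0) := by
  have htr {T : Matrix (Fin d) (Fin d) ℂ} (horth : ∀ j, (T * A j).trace = 0) : T.trace = 0 :=
    trace_eq_zero_of_forall_trace_mul_eq_zero hA.2 horth
  have rank_le_two_imp_rank_eq_two :
      (∃ T : Matrix (Fin d) (Fin d) ℂ, T.IsHermitian ∧ T ≠ 0 ∧ T.rank ≤ 2 ∧
        ∀ j, (T * A j).trace = 0) →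
      ∃ T : Matrix (Fin d) (Fin d) ℂ, T.IsHermitian ∧ T.rank = 2 ∧ ∀ j, (T * A j).trace = 0 :=
    fun ⟨T, hT, hT0, hrank, horth⟩ =>
      ⟨T, hT, hT.rank_eq_two_of_trace_eq_zero hT0 hrank (htr horth), horth⟩
  have rank_eq_two_imp_not_isIC :
      (∃ T : Matrix (Fin d) (Fin d) ℂ, T.IsHermitian ∧ T.rank = 2 ∧
        ∀ j, (T * A j).trace = 0) → ¬ IsIC A (PureStates d) :=
    fun ⟨T, hT, hrank, horth⟩ => not_isIC_of_rank_eq_two hT hrank (htr horth) horth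
  exact ⟨⟨exists_hermitian_rank_le_two_of_not_isIC,
      rank_eq_two_imp_not_isIC ∘ rank_le_two_imp_rank_eq_two⟩,
    ⟨rank_le_two_imp_rank_eq_two ∘ exists_hermitian_rank_le_two_of_not_isIC,
      rank_eq_two_imp_not_isIC⟩⟩
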